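/- For all (ξ,t) ∈ U × I and all α,β ∈ {1,2}, the time derivative of the metric tensor satisfies ∂g_{αβ}/∂t (ξ,t) = v_{β|α} + v_{α|β} − 2 v₃ b_{αβ}, where v_{β|α} := ∂_α v_β − Γ^γ_{αβ} v_γ and v₃ = v·n. -/

import Mathlib

noncomputable section

open scoped BigOperators Matrix

abbrev V3 := Fin 3 → ℝ
abbrev V2 := Fin 2 → ℝ

/-- Euclidean dot product on `ℝ³`. -/
def dot3 (a b : V3) : ℝ := ∑ i, a i * b i

/-- Euclidean norm on `ℝ³`. -/
def norm3 (a : V3) : ℝ := Real.sqrt (dot3 a a)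

/-- Partial derivative `∂_α` of a field on (part of) `ℝ²`. -/
def pd2 {E : Type*} [NormedAddCommGroup E] [NormedSpace ℝ E]
    (f : V2 → E) (α : Fin 2) (ξ : V2) : E :=
  fderiv ℝ f ξ (Pi.single α 1)

/-- Partial derivative `∂_i` of a field on (part of) `ℝ³`. -/
def pd3 {E : Type*} [NormedAddCommGroup E] [NormedSpace ℝ E]
    (f : V3 → E) (i : Fin 3) (q : V3) : E :=
  fderiv ℝ f q (Pi.single i 1)

/-- Covariant tangent basis `g_α = ∂_α R`. -/
def gcov (R : V2 → V3) (α : Fin 2) (ξ : V2) : V3 := pd2 R α ξ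

/-- Metric tensor `g_{αβ}`. -/
def gmat (R : V2 → V3) (ξ : V2) : Matrix (Fin 2) (Fin 2) ℝ :=
  Matrix.of fun α β => dot3 (gcov R α ξ) (gcov R β ξ)

/-- Inverse metric `g^{αβ}`. -/
def ginv (R : V2 → V3) (ξ : V2) : Matrix (Fin 2) (Fin 2) ℝ := (gmat R ξ)⁻¹

/-- Contravariant basis `g^α = g^{αβ} g_β`. -/
def gcon (R : V2 → V3) (α : Fin 2) (ξ : V2) : V3 :=
  ∑ β, ginv R ξ α β • gcov R β ξ

/-- Unit normal `n = (g₁ × g₂)/‖g₁ × g₂‖`. -/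
def nrm (R : V2 → V3) (ξ : V2) : V3 :=
  (norm3 (crossProduct (gcov R 0 ξ) (gcov R 1 ξ)))⁻¹ •
    crossProduct (gcov R 0 ξ) (gcov R 1 ξ)

/-- Tangential projection `P = I - n nᵀ`. -/
def Pmat (R : V2 → V3) (ξ : V2) : Matrix (Fin 3) (Fin 3) ℝ :=
  1 - Matrix.of fun i j => nrm R ξ i * nrm R ξ j

/-- Christoffel symbols `Γ^σ_{αβ} = g^σ · ∂_α g_β`. -/
def chris (R : V2 → V3) (σ α β : Fin 2) (ξ : V2) : ℝ :=
  dot3 (gcon R σ ξ) (pd2 (gcov R β) α ξ)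

/-- Second fundamental form `b_{αβ} = n · ∂_α g_β`. -/
def bcov (R : V2 → V3) (α β : Fin 2) (ξ : V2) : ℝ :=
  dot3 (nrm R ξ) (pd2 (gcov R β) α ξ)

/-- Mixed components `b^β_α = g^{βσ} b_{σα}`. -/
def bmix (R : V2 → V3) (β α : Fin 2) (ξ : V2) : ℝ :=
  ∑ σ, ginv R ξ β σ * bcov R σ α ξ

/-- Outer product `(a ⊗ b) w = (b·w) a` as a matrix. -/
def outer (a b : V3) : Matrix (Fin 3) (Fin 3) ℝ := Matrix.of fun i j => a i * b j

/-- Shape operator `B = b_{αβ} (g^α ⊗ g^β)`. -/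
def shapeOp (R : V2 → V3) (ξ : V2) : Matrix (Fin 3) (Fin 3) ℝ :=
  ∑ α, ∑ β, bcov R α β ξ • outer (gcon R α ξ) (gcon R β ξ)

/-- Cartesian (Euclidean) gradient of a scalar field on `ℝ³`. -/
def grad3 (f : V3 → ℝ) (y : V3) : V3 := fun i => fderiv ℝ f y (Pi.single i 1)

/-- Cartesian Jacobian `(∇̂ u)_{ij} = ∂_j u_i` of a vector field on `ℝ³`. -/
def jac3 (u : V3 → V3) (y : V3) : Matrix (Fin 3) (Fin 3) ℝ :=
  Matrix.of fun i j => fderiv ℝ u y (Pi.single j 1) i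

/-- Surface gradient `∇_Γ φ = (∂_α φ) g^α` (curvilinear definition). -/
def gradGamma (R : V2 → V3) (φ : V2 → ℝ) (ξ : V2) : V3 :=
  ∑ α, pd2 φ α ξ • gcon R α ξ

/-- Covariant derivative `∇_Γ u = (P ∂_α u) ⊗ g^α` (curvilinear definition). -/
def covDer (R : V2 → V3) (u : V2 → V3) (ξ : V2) : Matrix (Fin 3) (Fin 3) ℝ :=
  ∑ α, outer ((Pmat R ξ).mulVec (pd2 u α ξ)) (gcon R α ξ)

/-- Surface divergence `div_Γ u = ∂_α u · g^α` (curvilinear definition). -/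
def divGamma (R : V2 → V3) (u : V2 → V3) (ξ : V2) : ℝ :=
  ∑ α, dot3 (pd2 u α ξ) (gcon R α ξ)

/-- Entrywise partial derivative `∂_γ T` of a matrix-valued field. -/
def pdMat (T : V2 → Matrix (Fin 3) (Fin 3) ℝ) (γ : Fin 2) (ξ : V2) :
    Matrix (Fin 3) (Fin 3) ℝ :=
  Matrix.of fun i j => pd2 (fun ξ' => T ξ' i j) γ ξ

/-- Surface divergence `div_Γ T = (∂_α T)ᵀ g^α` of an operator-valued field. -/
def divGammaMat (R : V2 → V3) (T : V2 → Matrix (Fin 3) (Fin 3) ℝ) (ξ : V2) : V3 :=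
  ∑ α, (pdMat T α ξ)ᵀ.mulVec (gcon R α ξ)

/-- Surface rate-of-strain tensor `E(u) = ½(∇_Γ u + (∇_Γ u)ᵀ)`. -/
def strain (R : V2 → V3) (u : V2 → V3) (ξ : V2) : Matrix (Fin 3) (Fin 3) ℝ :=
  (1/2 : ℝ) • (covDer R u ξ + (covDer R u ξ)ᵀ)

/-- The first two coordinates of a point of `ℝ³`. -/
def emb2 (q : V3) : V2 := fun α => q α.castSucc

/-- Thin-film parametrization `R̃(ξ,ζ) = R(ξ) + ζ n(ξ)`. -/
def Rtilde (R : V2 → V3) (q : V3) : V3 := R (emb2 q) + q 2 • nrm R (emb2 q)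

/-- Thin-film covariant basis `G_i = ∂_i R̃`. -/
def Gcov (R : V2 → V3) (i : Fin 3) (q : V3) : V3 := pd3 (Rtilde R) i q

/-- Thin-film metric `G_{ij} = G_i · G_j`. -/
def Gmat (R : V2 → V3) (q : V3) : Matrix (Fin 3) (Fin 3) ℝ :=
  Matrix.of fun i j => dot3 (Gcov R i q) (Gcov R j q)

/-- Thin-film inverse metric `G^{ij}`. -/
def Ginv (R : V2 → V3) (q : V3) : Matrix (Fin 3) (Fin 3) ℝ := (Gmat R q)⁻¹

/-- Thin-film Christoffel symbols
`Γ̄^k_{ij} = ½ G^{kl}(∂_i G_{jl} + ∂_j G_{il} − ∂_l G_{ij})`. -/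
def chrisT (R : V2 → V3) (k i j : Fin 3) (q : V3) : ℝ :=
  (1/2 : ℝ) * ∑ l, Ginv R q k l *
    (pd3 (fun q' => Gmat R q' j l) i q + pd3 (fun q' => Gmat R q' i l) j q
      - pd3 (fun q' => Gmat R q' i j) l q)


section Helpers

lemma dot3_comm (a b : V3) : dot3 a b = dot3 b a :=
  Finset.sum_congr rfl fun i _ => mul_comm _ _

lemma dot3_nonneg (a : V3) : 0 ≤ dot3 a a :=
  Finset.sum_nonneg fun _ _ => mul_self_nonneg _

lemma dot3_eq_zero {a : V3} (h : dot3 a a = 0) : a = 0 := by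
  funext i
  have := (Finset.sum_eq_zero_iff_of_nonneg
    (fun i _ => mul_self_nonneg (a i))).1 h i (Finset.mem_univ i)
  exact mul_self_eq_zero.1 this

lemma hasDerivAt_dot3 {f g : ℝ → V3} {f' g' : V3} {t : ℝ}
    (hf : HasDerivAt f f' t) (hg : HasDerivAt g g' t) :
    HasDerivAt (fun s => dot3 (f s) (g s)) (dot3 f' (g t) + dot3 (f t) g') t := by
  have h := HasDerivAt.fun_sum (u := Finset.univ)
    (fun i _ => ((hasDerivAt_pi.1 hf i).mul (hasDerivAt_pi.1 hg i)))
  simpa [dot3, Finset.sum_add_distrib] using h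

lemma pd2_dot3 {f g : V2 → V3} {ξ : V2} (hf : DifferentiableAt ℝ f ξ)
    (hg : DifferentiableAt ℝ g ξ) (α : Fin 2) :
    pd2 (fun ξ' => dot3 (f ξ') (g ξ')) α ξ
      = dot3 (pd2 f α ξ) (g ξ) + dot3 (f ξ) (pd2 g α ξ) := by
  have hfi : ∀ i, HasFDerivAt (fun ξ' => f ξ' i)
      ((ContinuousLinearMap.proj i : V3 →L[ℝ] ℝ).comp (fderiv ℝ f ξ)) ξ :=
    fun i => ((ContinuousLinearMap.proj i : V3 →L[ℝ] ℝ)).hasFDerivAt.comp ξ hf.hasFDerivAt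
  have hgi : ∀ i, HasFDerivAt (fun ξ' => g ξ' i)
      ((ContinuousLinearMap.proj i : V3 →L[ℝ] ℝ).comp (fderiv ℝ g ξ)) ξ :=
    fun i => ((ContinuousLinearMap.proj i : V3 →L[ℝ] ℝ)).hasFDerivAt.comp ξ hg.hasFDerivAt
  have h := HasFDerivAt.fun_sum (u := Finset.univ)
    (fun i _ => ((hfi i).mul (hgi i)))
  have h2 : pd2 (fun ξ' => dot3 (f ξ') (g ξ')) α ξ
      = (∑ i : Fin 3, (f ξ i • (ContinuousLinearMap.proj i : V3 →L[ℝ] ℝ).comp (fderiv ℝ g ξ)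
          + g ξ i • (ContinuousLinearMap.proj i : V3 →L[ℝ] ℝ).comp (fderiv ℝ f ξ)))
            (Pi.single α 1) := by
    unfold pd2
    rw [show (fun ξ' => dot3 (f ξ') (g ξ')) = fun ξ' => ∑ i : Fin 3, f ξ' i * g ξ' i from rfl,
      (show HasFDerivAt (fun ξ' => ∑ i : Fin 3, f ξ' i * g ξ' i) _ ξ from h).fderiv]
  rw [h2]
  simp only [ContinuousLinearMap.sum_apply, ContinuousLinearMap.add_apply,
    ContinuousLinearMap.smul_apply, ContinuousLinearMap.comp_apply,
    ContinuousLinearMap.proj_apply, smul_eq_mul, dot3, pd2, Finset.sum_add_distrib]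
  ring_nf
  congr 1 <;> exact Finset.sum_congr rfl fun i _ => by ring

lemma completeness (R : V2 → V3) (ξ : V2)
    (hab : LinearIndependent ℝ ![gcov R 0 ξ, gcov R 1 ξ]) (v w : V3) :
    dot3 v w = (∑ γ, dot3 (gcon R γ ξ) w * dot3 v (gcov R γ ξ))
      + dot3 (nrm R ξ) w * dot3 v (nrm R ξ) := by
  set a := gcov R 0 ξ with ha
  set b := gcov R 1 ξ with hb
  set c : V3 := crossProduct a b with hc
  have lag : dot3 c c = dot3 a a * dot3 b b - dot3 a b * dot3 a b := by
    simp [hc, cross_apply, dot3, Fin.sum_univ_three]; ring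
  have hli := linearIndependent_fin2.mp hab
  simp only [Matrix.cons_val_one, Matrix.head_cons, Matrix.cons_val_zero] at hli
  have hcne : c ≠ 0 := by
    intro h
    have hcc : dot3 c c = 0 := by rw [h]; simp [dot3]
    have h0 : dot3 a a * dot3 b b = dot3 a b * dot3 a b := by linarith [lag, hcc]
    set u : V3 := fun i => dot3 b b * a i - dot3 a b * b i with hu
    have expand : dot3 u u
        = dot3 b b * (dot3 a a * dot3 b b - dot3 a b * dot3 a b) := by
      simp [hu, dot3, Fin.sum_univ_three]; ring
    have huu : dot3 u u = 0 := by rw [expand, h0, sub_self, mul_zero]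
    have hu0 := dot3_eq_zero huu
    have hbb : dot3 b b ≠ 0 := fun h' => hli.1 (dot3_eq_zero h')
    have : (dot3 a b / dot3 b b) • b = a := by
      funext i
      have hi : dot3 b b * a i - dot3 a b * b i = 0 := congrFun hu0 i
      simp only [Pi.smul_apply, smul_eq_mul]
      field_simp
      linarith
    exact hli.2 _ this
  have hd : 0 < dot3 c c :=
    lt_of_le_of_ne (dot3_nonneg c) (fun h' => hcne (dot3_eq_zero h'.symm))
  have hnw : ∀ x : V3, dot3 (nrm R ξ) x = (norm3 c)⁻¹ * dot3 c x := by
    intro x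
    simp only [nrm, ← ha, ← hb, ← hc, dot3, Pi.smul_apply, smul_eq_mul, Finset.mul_sum]
    exact Finset.sum_congr rfl fun i _ => by ring
  have hns : (norm3 c)⁻¹ * (norm3 c)⁻¹ = (dot3 c c)⁻¹ := by
    rw [← mul_inv]
    congr 1
    exact Real.mul_self_sqrt (dot3_nonneg c)
  have hdet : (gmat R ξ).det = dot3 c c := by
    rw [Matrix.det_fin_two, lag]
    simp only [gmat, Matrix.of_apply, ← ha, ← hb]
    rw [dot3_comm b a]
  have hadj := Matrix.adjugate_fin_two (gmat R ξ)
  have hginv : ∀ γ δ, ginv R ξ γ δ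
      = (dot3 c c)⁻¹ * (Matrix.adjugate (gmat R ξ)) γ δ := by
    intro γ δ
    simp [ginv, Matrix.inv_def, hdet, Ring.inverse_eq_inv']
  have e00 : ginv R ξ 0 0 = (dot3 c c)⁻¹ * dot3 b b := by
    rw [hginv, hadj]; simp [gmat, ← hb]
  have e01 : ginv R ξ 0 1 = (dot3 c c)⁻¹ * (- dot3 a b) := by
    rw [hginv, hadj]; simp [gmat, ← ha, ← hb]
  have e10 : ginv R ξ 1 0 = (dot3 c c)⁻¹ * (- dot3 a b) := by
    rw [hginv, hadj]; simp [gmat, ← ha, ← hb, dot3_comm b a]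
  have e11 : ginv R ξ 1 1 = (dot3 c c)⁻¹ * dot3 a a := by
    rw [hginv, hadj]; simp [gmat, ← ha]
  have P : dot3 c c * dot3 v w
      = dot3 v a * (dot3 b b * dot3 a w - dot3 a b * dot3 b w)
        + dot3 v b * (dot3 a a * dot3 b w - dot3 a b * dot3 a w)
        + dot3 v c * dot3 c w := by
    simp [hc, cross_apply, dot3, Fin.sum_univ_three]; ring
  rw [Fin.sum_univ_two]
  simp only [gcon, Fin.sum_univ_two, ← ha, ← hb]
  have hdotlin : ∀ (r s : ℝ) (x y z : V3),
      dot3 (r • x + s • y) z = r * dot3 x z + s * dot3 y z := by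
    intro r s x y z
    simp only [dot3, Pi.add_apply, Pi.smul_apply, smul_eq_mul, Finset.mul_sum,
      ← Finset.sum_add_distrib]
    exact Finset.sum_congr rfl fun i _ => by ring
  rw [hdotlin, hdotlin, hnw w,
    show dot3 v (nrm R ξ) = (norm3 c)⁻¹ * dot3 c v from (dot3_comm v _).trans (hnw v),
    e00, e01, e10, e11,
    show (norm3 c)⁻¹ * dot3 c w * ((norm3 c)⁻¹ * dot3 c v)
      = (dot3 c c)⁻¹ * (dot3 c w * dot3 c v) from by rw [← hns]; ring]
  have hinv : dot3 c c * (dot3 c c)⁻¹ = 1 := mul_inv_cancel₀ hd.ne'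
  linear_combination (dot3 c c)⁻¹ * P + (- dot3 v w) * hinv
    + (dot3 c c)⁻¹ * dot3 c w * dot3_comm v c

end Helpers

open Topology Filter

/-- Time derivative of the metric tensor:
`∂_t g_{αβ} = v_{β|α} + v_{α|β} - 2 v₃ b_{αβ}` (equation (eqE)). -/
theorem stmt9
    (U : Set V2) (hU : IsOpen U)
    (I : Set ℝ) (hI : IsOpen I) (hIc : I.OrdConnected)
    (R : V2 → ℝ → V3)
    (hR : ContDiffOn ℝ (⊤ : ℕ∞) (fun p : V2 × ℝ => R p.1 p.2) (U ×ˢ I))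
    (hImm : ∀ t ∈ I, ∀ ξ ∈ U,
      LinearIndependent ℝ ![gcov (fun z => R z t) 0 ξ, gcov (fun z => R z t) 1 ξ])
    (ξ : V2) (hξ : ξ ∈ U) (t : ℝ) (ht : t ∈ I) (α β : Fin 2) :
    deriv (fun s => dot3 (gcov (fun z => R z s) α ξ) (gcov (fun z => R z s) β ξ)) t
      = (pd2 (fun ξ' => dot3 (deriv (R ξ') t) (gcov (fun z => R z t) β ξ')) α ξ
          - ∑ γ, chris (fun z => R z t) γ α β ξ
              * dot3 (deriv (R ξ) t) (gcov (fun z => R z t) γ ξ))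
        + (pd2 (fun ξ' => dot3 (deriv (R ξ') t) (gcov (fun z => R z t) α ξ')) β ξ
          - ∑ γ, chris (fun z => R z t) γ β α ξ
              * dot3 (deriv (R ξ) t) (gcov (fun z => R z t) γ ξ))
        - 2 * dot3 (deriv (R ξ) t) (nrm (fun z => R z t) ξ)
            * bcov (fun z => R z t) α β ξ := by
  classical
  set F : V2 × ℝ → V3 := fun p => R p.1 p.2 with hFdef
  have hFopen : IsOpen (U ×ˢ I) := hU.prod hI
  have hFat : ∀ p ∈ U ×ˢ I, ContDiffAt ℝ (⊤ : ℕ∞) F p :=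
    fun p hp => hR.contDiffAt (hFopen.mem_nhds hp)
  set Φ : V2 × ℝ → (V2 × ℝ →L[ℝ] V3) := fderiv ℝ F with hΦdef
  have hξt : (ξ, t) ∈ U ×ˢ I := ⟨hξ, ht⟩
  -- Fact A : spatial derivatives
  have factA : ∀ s ∈ I, ∀ ξ' ∈ U, ∀ γ : Fin 2,
      gcov (fun z => R z s) γ ξ' = Φ (ξ', s) (Pi.single γ 1, 0) := by
    intro s hs ξ' hξ' γ
    have hdiff : DifferentiableAt ℝ F (ξ', s) :=
      (hFat _ ⟨hξ', hs⟩).differentiableAt (by simp)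
    have hι : HasFDerivAt (fun z : V2 => (z, s))
        ((ContinuousLinearMap.id ℝ V2).prod 0) ξ' :=
      HasFDerivAt.prodMk (hasFDerivAt_id ξ') (hasFDerivAt_const s ξ')
    have hcomp : HasFDerivAt (fun z => R z s)
        ((Φ (ξ', s)).comp ((ContinuousLinearMap.id ℝ V2).prod 0)) ξ' :=
      by have := HasFDerivAt.comp ξ' hdiff.hasFDerivAt hι; exact this
    rw [show gcov (fun z => R z s) γ ξ'
        = fderiv ℝ (fun z => R z s) ξ' (Pi.single γ 1) from rfl, hcomp.fderiv]
    rfl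
  -- Fact B : time derivatives
  have factB : ∀ s ∈ I, ∀ ξ' ∈ U,
      HasDerivAt (R ξ') (Φ (ξ', s) (0, 1)) s := by
    intro s hs ξ' hξ'
    have hdiff : DifferentiableAt ℝ F (ξ', s) :=
      (hFat _ ⟨hξ', hs⟩).differentiableAt (by simp)
    have hι : HasDerivAt (fun u : ℝ => (ξ', u)) ((0 : V2), (1 : ℝ)) s :=
      HasDerivAt.prodMk (hasDerivAt_const s ξ') (hasDerivAt_id s)
    exact hdiff.hasFDerivAt.comp_hasDerivAt s hι
  -- smoothness of Φ
  have hΦcd : ContDiffAt ℝ 1 Φ (ξ, t) := (hFat _ hξt).fderiv_right (by exact WithTop.coe_le_coe.mpr le_top)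
  have hΦdiff : DifferentiableAt ℝ Φ (ξ, t) := hΦcd.differentiableAt one_ne_zero
  set Φ' : V2 × ℝ →L[ℝ] V2 × ℝ →L[ℝ] V3 := fderiv ℝ Φ (ξ, t) with hΦ'def
  have hsym : ∀ p q : V2 × ℝ, Φ' p q = Φ' q p := by
    intro p q
    exact (hFat _ hξt).isSymmSndFDerivAt ((by rw [minSmoothness_of_isRCLikeNormedField]; exact WithTop.coe_le_coe.mpr le_top)) p q
  -- derivative of Φ along curves
  have hΦt : HasDerivAt (fun s => Φ (ξ, s)) (Φ' ((0 : V2), (1 : ℝ))) t :=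
    hΦdiff.hasFDerivAt.comp_hasDerivAt t (HasDerivAt.prodMk (hasDerivAt_const t ξ) (hasDerivAt_id t))
  have hΦξ : HasFDerivAt (fun ξ' => Φ (ξ', t))
      (Φ'.comp ((ContinuousLinearMap.id ℝ V2).prod 0)) ξ :=
    hΦdiff.hasFDerivAt.comp ξ (HasFDerivAt.prodMk (hasFDerivAt_id ξ) (hasFDerivAt_const t ξ))
  -- LHS computation
  have evI : ∀ᶠ s in 𝓝 t, s ∈ I := hI.eventually_mem ht
  have evU : ∀ᶠ ξ' in 𝓝 ξ, ξ' ∈ U := hU.eventually_mem hξ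
  have hgs : ∀ γ : Fin 2, HasDerivAt (fun s => Φ (ξ, s) (Pi.single γ 1, 0))
      (Φ' ((0 : V2), (1 : ℝ)) (Pi.single γ 1, 0)) t := by
    intro γ
    have := hΦt.clm_apply (hasDerivAt_const t ((Pi.single γ 1 : V2), (0 : ℝ)))
    simpa using this
  have hLfun : (fun s => dot3 (gcov (fun z => R z s) α ξ) (gcov (fun z => R z s) β ξ))
      =ᶠ[𝓝 t] fun s => dot3 (Φ (ξ, s) (Pi.single α 1, 0)) (Φ (ξ, s) (Pi.single β 1, 0)) := by
    filter_upwards [evI] with s hs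
    rw [factA s hs ξ hξ α, factA s hs ξ hξ β]
  have hLHS : deriv (fun s => dot3 (gcov (fun z => R z s) α ξ)
        (gcov (fun z => R z s) β ξ)) t
      = dot3 (Φ' (0, 1) (Pi.single α 1, 0)) (Φ (ξ, t) (Pi.single β 1, 0))
        + dot3 (Φ (ξ, t) (Pi.single α 1, 0)) (Φ' (0, 1) (Pi.single β 1, 0)) := by
    rw [hLfun.deriv_eq]
    exact (hasDerivAt_dot3 (hgs α) (hgs β)).deriv
  -- pd2 of CLM-applied fields
  have hvdiff : DifferentiableAt ℝ (fun ξ' => Φ (ξ', t) ((0 : V2), (1 : ℝ))) ξ :=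
    hΦξ.differentiableAt.clm_apply (differentiableAt_const _)
  have hgdiff : ∀ γ : Fin 2,
      DifferentiableAt ℝ (fun ξ' => Φ (ξ', t) (Pi.single γ 1, 0)) ξ :=
    fun γ => hΦξ.differentiableAt.clm_apply (differentiableAt_const _)
  have hpd : ∀ (w : V2 × ℝ) (γ : Fin 2),
      pd2 (fun ξ' => Φ (ξ', t) w) γ ξ = Φ' (Pi.single γ 1, 0) w := by
    intro w γ
    have h := hΦξ.clm_apply (hasFDerivAt_const w ξ)
    unfold pd2
    rw [h.fderiv]
    simp
  -- terms of the RHS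
  have hterm : ∀ γ δ : Fin 2,
      pd2 (fun ξ' => dot3 (deriv (R ξ') t) (gcov (fun z => R z t) γ ξ')) δ ξ
        = dot3 (Φ' (Pi.single δ 1, 0) (0, 1)) (Φ (ξ, t) (Pi.single γ 1, 0))
          + dot3 (Φ (ξ, t) (0, 1)) (Φ' (Pi.single δ 1, 0) (Pi.single γ 1, 0)) := by
    intro γ δ
    have hfe : (fun ξ' => dot3 (deriv (R ξ') t) (gcov (fun z => R z t) γ ξ'))
        =ᶠ[𝓝 ξ] fun ξ' => dot3 (Φ (ξ', t) (0, 1)) (Φ (ξ', t) (Pi.single γ 1, 0)) := by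
      filter_upwards [evU] with ξ' hξ'
      rw [(factB t ht ξ' hξ').deriv, factA t ht ξ' hξ' γ]
    have h1 : pd2 (fun ξ' => dot3 (deriv (R ξ') t) (gcov (fun z => R z t) γ ξ')) δ ξ
        = pd2 (fun ξ' => dot3 (Φ (ξ', t) (0, 1)) (Φ (ξ', t) (Pi.single γ 1, 0))) δ ξ := by
      unfold pd2
      rw [hfe.fderiv_eq]
    rw [h1, pd2_dot3 hvdiff (hgdiff γ), hpd, hpd]
  have hW : ∀ γ δ : Fin 2, pd2 (gcov (fun z => R z t) γ) δ ξ
      = Φ' (Pi.single δ 1, 0) (Pi.single γ 1, 0) := by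
    intro γ δ
    have hfe : gcov (fun z => R z t) γ
        =ᶠ[𝓝 ξ] fun ξ' => Φ (ξ', t) (Pi.single γ 1, 0) := by
      filter_upwards [evU] with ξ' hξ'
      exact factA t ht ξ' hξ' γ
    have h1 : pd2 (gcov (fun z => R z t) γ) δ ξ
        = pd2 (fun ξ' => Φ (ξ', t) (Pi.single γ 1, 0)) δ ξ := by
      unfold pd2
      rw [hfe.fderiv_eq]
    rw [h1, hpd]
  -- abbreviations
  have hv : deriv (R ξ) t = Φ (ξ, t) (0, 1) := (factB t ht ξ hξ).deriv
  -- completeness applied to W_{αβ}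
  have hLI := hImm t ht ξ hξ
  have comp1 := completeness (fun z => R z t) ξ hLI (deriv (R ξ) t)
    (pd2 (gcov (fun z => R z t) β) α ξ)
  rw [hv] at comp1
  -- rewrite chris and bcov
  simp only [chris, bcov]
  rw [hLHS, hterm β α, hterm α β, hv]
  have hWsym : pd2 (gcov (fun z => R z t) α) β ξ
      = pd2 (gcov (fun z => R z t) β) α ξ := by
    rw [hW α β, hW β α, hsym]
  rw [hWsym]
  rw [hsym ((Pi.single β 1 : V2), (0 : ℝ)) ((Pi.single α 1 : V2), (0 : ℝ))]
  rw [← hW β α]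
  rw [hsym ((Pi.single α 1 : V2), (0 : ℝ)) (((0 : V2), (1 : ℝ))),
    hsym ((Pi.single β 1 : V2), (0 : ℝ)) (((0 : V2), (1 : ℝ)))]
  linear_combination (-2 : ℝ) * comp1
    + dot3_comm (Φ (ξ, t) (Pi.single α 1, 0)) (Φ' ((0 : V2), (1 : ℝ)) (Pi.single β 1, 0))
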